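/- arXiv:2109.11692 — 5 statements merged into one kernel-verified Lean document; each statement's English description precedes it below -/
import Mathlib

section
/- Let f : Z → ℝ satisfy m ≤ f(z) ≤ M for all z ∈ Z and some reals m ≤ M. For each k ∈ K let μ_k and ν_k be probability distributions on Z_k, and let μ = ⊗_{k∈K} μ_k and ν = ⊗_{k∈K} ν_k be the corresponding product distributions on Z. Then |E_{z∼μ}[f(z)] − E_{z∼ν}[f(z)]| ≤ Σ_{k∈K} TV(μ_k, ν_k) · δ_k(f), where δ_k(f) = sup{|f(z) − f(z')| : z, z' ∈ Z differ at most in coordinate k}. -/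
open scoped BigOperators
open Finset

noncomputable section

/-- Total variation distance between two distributions on a finite type. -/
def tv {X : Type*} [Fintype X] (μ ν : X → ℝ) : ℝ := (∑ x, |μ x - ν x|) / 2

lemma key {K : Type*} [Fintype K] [DecidableEq K]
    {Z : K → Type*} [∀ k, Fintype (Z k)] [∀ k, Nonempty (Z k)]
    (f : (∀ k, Z k) → ℝ) (k : K)
    (p : ∀ i, Z i → ℝ) (hp0 : ∀ i x, 0 ≤ p i x) (hp1 : ∀ i, ∑ x, p i x = 1)
    (a b : Z k → ℝ) (ha1 : ∑ x, a x = 1) (hb1 : ∑ x, b x = 1)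
    (D : ℝ)
    (hD : ∀ z z' : ∀ i, Z i, (∀ i, i ≠ k → z i = z' i) → |f z - f z'| ≤ D) :
    |∑ z, (∏ i ∈ univ.erase k, p i (z i)) * ((a (z k) - b (z k)) * f z)| ≤ tv a b * D := by
  classical
  set e := Equiv.piSplitAt k Z with he
  -- weight on the remaining coordinates
  set W : (∀ j : {j // j ≠ k}, Z j) → ℝ := fun y => ∏ j : {j // j ≠ k}, p j (y j) with hW
  have hW0 : ∀ y, 0 ≤ W y := fun y => Finset.prod_nonneg fun j _ => hp0 _ _
  have hW1 : ∑ y, W y = 1 := by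
    rw [hW, ← Fintype.prod_sum]
    simp [hp1]
  -- rewrite the prod over erase k
  have hsymm_k : ∀ (x : Z k) (y), e.symm (x, y) k = x := by
    intro x y; simp [he]
  have hsymm_ne : ∀ (x : Z k) (y) (j : K) (h : j ≠ k), e.symm (x, y) j = y ⟨j, h⟩ := by
    intro x y j h; simp [he, Equiv.piSplitAt_symm_apply, dif_neg h]
  have hdiff : ∀ (x x' : Z k) (y) (i : K), i ≠ k → e.symm (x, y) i = e.symm (x', y) i := by
    intro x x' y i h; rw [hsymm_ne x y i h, hsymm_ne x' y i h]
  set g : Z k → ℝ := fun x => ∑ y, W y * f (e.symm (x, y)) with hg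
  -- the sum equals ∑ x, (a x - b x) * g x
  have hsum : (∑ z, (∏ i ∈ univ.erase k, p i (z i)) * ((a (z k) - b (z k)) * f z))
      = ∑ x, (a x - b x) * g x := by
    rw [← Equiv.sum_comp e.symm (fun z => (∏ i ∈ univ.erase k, p i (z i)) * ((a (z k) - b (z k)) * f z)),
      Fintype.sum_prod_type]
    refine Finset.sum_congr rfl fun x _ => ?_
    rw [hg, Finset.mul_sum]
    refine Finset.sum_congr rfl fun y _ => ?_
    have hprod : (∏ i ∈ univ.erase k, p i (e.symm (x, y) i)) = W y := by
      rw [hW]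
      rw [Finset.prod_subtype (univ.erase k) (p := fun j => j ≠ k)
        (by simp) (fun i => p i (e.symm (x, y) i))]
      exact Finset.prod_congr rfl fun j _ => by rw [hsymm_ne x y j j.2]
    rw [hprod, hsymm_k]
    ring
  rw [hsum]
  -- bound on oscillation of g
  have hD0 : 0 ≤ D := le_trans (by simp) (hD (Classical.arbitrary _) (Classical.arbitrary _) (fun _ _ => rfl))
  have hgosc : ∀ x x', g x - g x' ≤ D := by
    intro x x'
    rw [hg]
    simp only
    rw [← Finset.sum_sub_distrib]
    calc ∑ y, (W y * f (e.symm (x, y)) - W y * f (e.symm (x', y)))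
        ≤ ∑ y, W y * D := by
          refine Finset.sum_le_sum fun y _ => ?_
          rw [← mul_sub]
          calc W y * (f (e.symm (x, y)) - f (e.symm (x', y)))
              ≤ W y * |f (e.symm (x, y)) - f (e.symm (x', y))| :=
                mul_le_mul_of_nonneg_left (le_abs_self _) (hW0 y)
            _ ≤ W y * D := mul_le_mul_of_nonneg_left
                (hD _ _ (fun i h => hdiff x x' y i h)) (hW0 y)
      _ = D := by rw [← Finset.sum_mul, hW1, one_mul]
  obtain ⟨x1, -, hx1⟩ := Finset.exists_max_image (univ : Finset (Z k)) g ⟨Classical.arbitrary _, mem_univ _⟩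
  obtain ⟨x2, -, hx2⟩ := Finset.exists_min_image (univ : Finset (Z k)) g ⟨Classical.arbitrary _, mem_univ _⟩
  set c := (g x1 + g x2) / 2 with hc
  have hzero : ∑ x, (a x - b x) = 0 := by rw [Finset.sum_sub_distrib, ha1, hb1, sub_self]
  have hrw : ∑ x, (a x - b x) * g x = ∑ x, (a x - b x) * (g x - c) := by
    simp only [mul_sub]
    rw [Finset.sum_sub_distrib, ← Finset.sum_mul, hzero, zero_mul, sub_zero]
  rw [hrw]
  calc |∑ x, (a x - b x) * (g x - c)| ≤ ∑ x, |(a x - b x) * (g x - c)| :=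
        Finset.abs_sum_le_sum_abs _ _
    _ ≤ ∑ x, |a x - b x| * (D / 2) := by
        refine Finset.sum_le_sum fun x _ => ?_
        rw [abs_mul]
        refine mul_le_mul_of_nonneg_left ?_ (abs_nonneg _)
        rw [abs_le]
        have h1 := hx1 x (mem_univ x)
        have h2 := hx2 x (mem_univ x)
        have o1 := hgosc x1 x2
        constructor <;> · rw [hc]; linarith
    _ = tv a b * D := by rw [← Finset.sum_mul, tv]; ring

/-- a product-measure coupling bound: the difference of expectations of a
bounded function under two product distributions is controlled by the sum over coordinates
of the total variation distances times the oscillations of `f` in each coordinate. -/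
theorem stmt0 {K : Type*} [Fintype K] [DecidableEq K] [Nonempty K]
    {Z : K → Type*} [∀ k, Fintype (Z k)] [∀ k, Nonempty (Z k)]
    (f : (∀ k, Z k) → ℝ) (m M : ℝ) (hmM : m ≤ M)
    (hf : ∀ z, m ≤ f z ∧ f z ≤ M)
    (μ ν : ∀ k, Z k → ℝ)
    (hμ0 : ∀ k x, 0 ≤ μ k x) (hμ1 : ∀ k, ∑ x, μ k x = 1)
    (hν0 : ∀ k x, 0 ≤ ν k x) (hν1 : ∀ k, ∑ x, ν k x = 1) :
    |(∑ z, (∏ k, μ k (z k)) * f z) - ∑ z, (∏ k, ν k (z k)) * f z| ≤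
      ∑ k, tv (μ k) (ν k) *
        (⨆ p : {p : (∀ i, Z i) × (∀ i, Z i) // ∀ i, i ≠ k → p.1 i = p.2 i},
          |f p.1.1 - f p.1.2|) := by
  classical
  set n := Fintype.card K with hn
  set eK : Fin n ≃ K := (Fintype.equivFin K).symm with heK
  set D : K → ℝ := fun k =>
    ⨆ p : {p : (∀ i, Z i) × (∀ i, Z i) // ∀ i, i ≠ k → p.1 i = p.2 i},
      |f p.1.1 - f p.1.2| with hDdef
  have hbdd : ∀ k : K, BddAbove (Set.range fun p :
      {p : (∀ i, Z i) × (∀ i, Z i) // ∀ i, i ≠ k → p.1 i = p.2 i} => |f p.1.1 - f p.1.2|) := by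
    intro k
    refine ⟨M - m, ?_⟩
    rintro _ ⟨p, rfl⟩
    have h1 := hf p.1.1
    have h2 := hf p.1.2
    rw [abs_sub_le_iff]
    constructor <;> linarith
  have hD : ∀ (k : K) (z z' : ∀ i, Z i), (∀ i, i ≠ k → z i = z' i) → |f z - f z'| ≤ D k := by
    intro k z z' h
    exact le_ciSup (hbdd k) (⟨(z, z'), h⟩ :
      {p : (∀ i, Z i) × (∀ i, Z i) // ∀ i, i ≠ k → p.1 i = p.2 i})
  set w : ℕ → ∀ i, Z i → ℝ := fun j i => if (eK.symm i : ℕ) < j then ν i else μ i with hw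
  have hw0 : ∀ j i x, 0 ≤ w j i x := by
    intro j i x; rw [hw]; dsimp only; split_ifs; exacts [hν0 i x, hμ0 i x]
  have hw1 : ∀ j i, ∑ x, w j i x = 1 := by
    intro j i; rw [hw]; dsimp only; split_ifs; exacts [hν1 i, hμ1 i]
  set H : ℕ → ℝ := fun j => ∑ z, (∏ i, w j i (z i)) * f z with hH
  have h0 : H 0 = ∑ z, (∏ k, μ k (z k)) * f z := by
    simp [hH, hw]
  have hlast : H n = ∑ z, (∏ k, ν k (z k)) * f z := by
    simp [hH, hw, Fin.is_lt]
  -- per-step bound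
  have hstep : ∀ j : Fin n, |H j - H (j + 1)| ≤ tv (μ (eK j)) (ν (eK j)) * D (eK j) := by
    intro j
    set k := eK j with hk
    have hwj : ∀ i : K, i ≠ k → w (j + 1) i = w j i := by
      intro i hi
      rw [hw]
      dsimp only
      have : ((eK.symm i : ℕ) < j + 1) ↔ ((eK.symm i : ℕ) < j) := by
        rw [Nat.lt_succ_iff_lt_or_eq]
        constructor
        · rintro (h | h)
          · exact h
          · exfalso; apply hi
            have : eK.symm i = j := Fin.ext h
            rw [hk, ← this, Equiv.apply_symm_apply]
        · exact Or.inl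
      simp only [this]
    have hwk1 : w j k = μ k := by
      rw [hw]; dsimp only
      rw [hk, Equiv.symm_apply_apply]
      simp
    have hwk2 : w (j + 1) k = ν k := by
      rw [hw]; dsimp only
      rw [hk, Equiv.symm_apply_apply]
      simp [Nat.lt_succ_self]
    have hdiff : H j - H (j + 1)
        = ∑ z, (∏ i ∈ univ.erase k, w j i (z i)) * ((μ k (z k) - ν k (z k)) * f z) := by
      rw [hH]
      dsimp only
      rw [← Finset.sum_sub_distrib]
      refine Finset.sum_congr rfl fun z _ => ?_
      have e1 : (∏ i, w j i (z i)) = μ k (z k) * ∏ i ∈ univ.erase k, w j i (z i) := by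
        rw [← Finset.mul_prod_erase univ (fun i => w j i (z i)) (mem_univ k), hwk1]
      have e2 : (∏ i, w (j + 1) i (z i)) = ν k (z k) * ∏ i ∈ univ.erase k, w j i (z i) := by
        rw [← Finset.mul_prod_erase univ (fun i => w (j + 1) i (z i)) (mem_univ k), hwk2]
        congr 1
        exact Finset.prod_congr rfl fun i hi => by
          rw [hwj i (Finset.mem_erase.mp hi).1]
      rw [e1, e2]; ring
    rw [hdiff]
    exact key f k (w j) (hw0 j) (hw1 j) (μ k) (ν k) (hμ1 k) (hν1 k) (D k) (hD k)
  -- telescoping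
  calc |(∑ z, (∏ k, μ k (z k)) * f z) - ∑ z, (∏ k, ν k (z k)) * f z|
      = |∑ j ∈ Finset.range n, (H j - H (j + 1))| := by
        rw [Finset.sum_range_sub' H n, h0, hlast]
    _ = |∑ j : Fin n, (H j - H (j + 1))| := by
        rw [← Fin.sum_univ_eq_sum_range (fun j => H j - H (j + 1)) n]
    _ ≤ ∑ j : Fin n, |H j - H (j + 1)| := Finset.abs_sum_le_sum_abs _ _
    _ ≤ ∑ j : Fin n, tv (μ (eK j)) (ν (eK j)) * D (eK j) :=
        Finset.sum_le_sum fun j _ => hstep j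
    _ = ∑ k, tv (μ k) (ν k) * D k := Equiv.sum_comp eK (fun k => tv (μ k) (ν k) * D k)
end
end

section
/- Let (P_k)_{k∈K} be a factorized Markov kernel on Z with Dobrushin influence bound C, and suppose there are β ≥ 0 and ρ ≥ 0 with Σ_{j∈K} e^{β d(j,k)} C_{kj} ≤ ρ for every k ∈ K. For z ∈ Z define the t-step laws d_t^z on Z by d_0^z = δ_z and d_{t+1}^z(z') = Σ_{y∈Z} d_t^z(y) P(z'|y), let d_{t,k}^z denote the marginal of d_t^z on Z_k, and set δ_i P_k^t = max{TV(d_{t,k}^z, d_{t,k}^{z'}) : z, z' ∈ Z differ at most in coordinate i}. Then for every k ∈ K and every t ≥ 1, Σ_{i∈K} e^{β d(k,i)} · δ_i P_k^t ≤ ρ^t. -/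
open scoped BigOperators

noncomputable section

/-- `t`-step laws of the factorized Markov chain with local kernels `P k`, started at the
Dirac mass at `z`. -/
def stepLaw {K : Type*} [Fintype K] [DecidableEq K] {Z : K → Type*}
    [∀ k, Fintype (Z k)] [∀ k, DecidableEq (Z k)]
    (P : ∀ k, (∀ j, Z j) → Z k → ℝ) : ℕ → (∀ j, Z j) → (∀ j, Z j) → ℝ
  | 0, z, z' => if z' = z then 1 else 0
  | t + 1, z, z' => ∑ y, stepLaw P t z y * ∏ k, P k y (z' k)

/-- Marginal of a distribution on the product space at coordinate `k`. -/
def marginal {K : Type*} [Fintype K] [DecidableEq K] {Z : K → Type*}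
    [∀ k, Fintype (Z k)] [∀ k, DecidableEq (Z k)]
    (μ : (∀ j, Z j) → ℝ) (k : K) (x : Z k) : ℝ :=
  ∑ y, if y k = x then μ y else 0

set_option linter.unusedSectionVars false
set_option linter.unusedVariables false

set_option linter.unusedSectionVars false
set_option linter.unusedVariables false

lemma tv_nonneg {X : Type*} [Fintype X] (μ ν : X → ℝ) : 0 ≤ tv μ ν := by
  unfold tv; positivity

lemma tv_self' {X : Type*} [Fintype X] (μ : X → ℝ) : tv μ μ = 0 := by simp [tv]

lemma tv_triangle' {X : Type*} [Fintype X] (μ ν σ : X → ℝ) : tv μ σ ≤ tv μ ν + tv ν σ := by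
  unfold tv
  rw [← add_div, ← Finset.sum_add_distrib]
  gcongr with x hx
  calc |μ x - σ x| = |(μ x - ν x) + (ν x - σ x)| := by ring_nf
    _ ≤ |μ x - ν x| + |ν x - σ x| := abs_add_le _ _

section Pi
variable {K : Type*} [Fintype K] [DecidableEq K] {Z : K → Type*}
    [∀ k, Fintype (Z k)] [∀ k, DecidableEq (Z k)]

lemma sum_prod_pi' (g : ∀ l, Z l → ℝ) :
    ∑ y : ∀ l, Z l, ∏ l, g l (y l) = ∏ l, ∑ x, g l x := by
  rw [Finset.prod_univ_sum, Fintype.piFinset_univ]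

lemma sum_pi_ite (g : ∀ l, Z l → ℝ) (j : K) (b : Z j) :
    ∑ y : ∀ l, Z l, (if y j = b then ∏ l, g l (y l) else 0)
      = g j b * ∏ l ∈ Finset.univ.erase j, ∑ x, g l x := by
  classical
  set g' : ∀ l, Z l → ℝ := Function.update g j (fun c => if c = b then g j c else 0) with hg'
  have herase : ∀ y : ∀ l, Z l, ∏ l ∈ Finset.univ.erase j, g' l (y l)
      = ∏ l ∈ Finset.univ.erase j, g l (y l) := by
    intro y
    apply Finset.prod_congr rfl
    intro l hl
    rw [hg', Function.update_of_ne (Finset.ne_of_mem_erase hl)]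
  have key : ∀ y : ∀ l, Z l, (if y j = b then ∏ l, g l (y l) else 0)
      = ∏ l, g' l (y l) := by
    intro y
    have h1 : ∏ l, g' l (y l) = g' j (y j) * ∏ l ∈ Finset.univ.erase j, g' l (y l) :=
      (Finset.mul_prod_erase Finset.univ (fun l => g' l (y l)) (Finset.mem_univ j)).symm
    rw [h1, herase, hg', Function.update_self]
    split_ifs with hyb
    · subst hyb
      exact (Finset.mul_prod_erase Finset.univ (fun l => g l (y l)) (Finset.mem_univ j)).symm
    · rw [zero_mul]
  simp_rw [key]
  rw [sum_prod_pi']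
  rw [← Finset.mul_prod_erase Finset.univ (fun l => ∑ x, g' l x) (Finset.mem_univ j)]
  congr 1
  · rw [hg', Function.update_self, Finset.sum_ite_eq' Finset.univ b (g j),
      if_pos (Finset.mem_univ b)]
  · apply Finset.prod_congr rfl
    intro l hl
    rw [hg', Function.update_of_ne (Finset.ne_of_mem_erase hl)]

end Pi


section Pi
variable {K : Type*} [Fintype K] [DecidableEq K] {Z : K → Type*}
    [∀ k, Fintype (Z k)] [∀ k, DecidableEq (Z k)]

/-- sums of a coordinate-`j`-invariant function over slices `{y j = b}` don't depend on `b`. -/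
lemma sum_ite_shift (j : K) (f : (∀ l, Z l) → ℝ)
    (hf : ∀ (y : ∀ l, Z l) (c : Z j), f (Function.update y j c) = f y) (b b' : Z j) :
    ∑ y : ∀ l, Z l, (if y j = b then f y else 0)
      = ∑ y : ∀ l, Z l, (if y j = b' then f y else 0) := by
  classical
  let e : (Z j × ∀ l, Z l) ≃ (Z j × ∀ l, Z l) :=
    { toFun := fun p => (p.2 j, Function.update p.2 j p.1)
      invFun := fun p => (p.2 j, Function.update p.2 j p.1)
      left_inv := by
        intro p
        simp [Function.update_idem, Function.update_self, Function.update_eq_self]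
      right_inv := by
        intro p
        simp [Function.update_idem, Function.update_self, Function.update_eq_self] }
  have h1 : ∀ (b₁ : Z j) (b₂ : Z j),
      (∑ p : Z j × ∀ l, Z l, if p.1 = b₁ ∧ p.2 j = b₂ then f p.2 else 0)
        = ∑ y : ∀ l, Z l, if y j = b₂ then f y else 0 := by
    intro b₁ b₂
    rw [Fintype.sum_prod_type]
    have hswap : ∀ a : Z j, (∑ y : ∀ l, Z l, if a = b₁ ∧ y j = b₂ then f y else 0)
        = if a = b₁ then (∑ y : ∀ l, Z l, if y j = b₂ then f y else 0) else 0 := by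
      intro a
      split_ifs with h
      · apply Finset.sum_congr rfl; intro y _; simp [h]
      · apply Finset.sum_eq_zero; intro y _; simp [h]
    simp_rw [hswap]
    rw [Finset.sum_ite_eq' Finset.univ b₁
      (fun _ => ∑ y : ∀ l, Z l, if y j = b₂ then f y else 0)]
    simp
  have h2 : (∑ p : Z j × ∀ l, Z l, if p.1 = b ∧ p.2 j = b' then f p.2 else 0)
      = ∑ p : Z j × ∀ l, Z l, if p.1 = b' ∧ p.2 j = b then f p.2 else 0 := by
    rw [← Equiv.sum_comp e (fun p => if p.1 = b ∧ p.2 j = b' then f p.2 else 0)]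
    apply Finset.sum_congr rfl
    intro p _
    show (if p.2 j = b ∧ (Function.update p.2 j p.1) j = b' then f (Function.update p.2 j p.1) else 0)
      = if p.1 = b' ∧ p.2 j = b then f p.2 else 0
    rw [Function.update_self, hf]
    by_cases h : p.2 j = b ∧ p.1 = b' <;> by_cases h' : p.1 = b' ∧ p.2 j = b <;>
      simp_all [and_comm]
  rw [← h1 b b', h2, h1 b' b]
end Pi

/-- convexity of TV under mixtures with the same nonnegative weights. -/
lemma tv_mix {X I : Type*} [Fintype X] [Fintype I] (w : I → ℝ) (hw : ∀ i, 0 ≤ w i)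
    (f g : I → X → ℝ) :
    tv (fun x => ∑ i, w i * f i x) (fun x => ∑ i, w i * g i x)
      ≤ ∑ i, w i * tv (f i) (g i) := by
  unfold tv
  simp_rw [← mul_div_assoc]
  rw [← Finset.sum_div]
  gcongr
  calc ∑ x, |∑ i, w i * f i x - ∑ i, w i * g i x|
      = ∑ x, |∑ i, w i * (f i x - g i x)| := by
        apply Finset.sum_congr rfl; intro x _; congr 1
        rw [← Finset.sum_sub_distrib]; apply Finset.sum_congr rfl; intros; ring
    _ ≤ ∑ x, ∑ i, |w i * (f i x - g i x)| := by
        gcongr with x hx; exact Finset.abs_sum_le_sum_abs _ _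
    _ = ∑ i, w i * ∑ x, |f i x - g i x| := by
        rw [Finset.sum_comm]
        apply Finset.sum_congr rfl; intro i _
        rw [Finset.mul_sum]
        apply Finset.sum_congr rfl; intro x _
        rw [abs_mul, abs_of_nonneg (hw i)]

/-- combination lemma: a zero-sum combination of functions is controlled by
pairwise TV distances. -/
lemma tv_comb {X B : Type*} [Fintype X] [Fintype B] [Nonempty B]
    (c : B → ℝ) (hc : ∑ b, c b = 0) (G : B → X → ℝ) (M : ℝ)
    (hM : ∀ b b', tv (G b) (G b') ≤ M) :
    (∑ x, |∑ b, c b * G b x|) / 2 ≤ ((∑ b, |c b|) / 2) * M := by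
  classical
  have hM0 : 0 ≤ M := le_trans (by simp [tv]) (hM (Classical.arbitrary B) (Classical.arbitrary B))
  set p : B → ℝ := fun b => max (c b) 0 with hp
  set n : B → ℝ := fun b => max (-c b) 0 with hn
  have hp0 : ∀ b, 0 ≤ p b := fun b => le_max_right _ _
  have hn0 : ∀ b, 0 ≤ n b := fun b => le_max_right _ _
  have hpn : ∀ b, c b = p b - n b := by
    intro b
    rcases le_total (c b) 0 with h|h
    · simp only [hp, hn]; rw [max_eq_right h, max_eq_left (by linarith)]; ring
    · simp only [hp, hn]; rw [max_eq_left h, max_eq_right (by linarith)]; ring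
  have habs : ∀ b, |c b| = p b + n b := by
    intro b
    rcases le_total (c b) 0 with h|h
    · rw [abs_of_nonpos h]; simp only [hp, hn]
      rw [max_eq_right h, max_eq_left (by linarith)]; ring
    · rw [abs_of_nonneg h]; simp only [hp, hn]
      rw [max_eq_left h, max_eq_right (by linarith)]; ring
  set s : ℝ := ∑ b, p b with hs
  have hsn : ∑ b, n b = s := by
    have h0 : ∑ b, (p b - n b) = 0 := by simp_rw [← hpn]; exact hc
    rw [Finset.sum_sub_distrib] at h0; rw [hs]; linarith
  have hs0 : 0 ≤ s := Finset.sum_nonneg fun b _ => hp0 b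
  have habs2 : (∑ b, |c b|) / 2 = s := by
    simp_rw [habs]; rw [Finset.sum_add_distrib, hsn]; rw [hs]; ring
  rw [habs2]
  rcases eq_or_lt_of_le hs0 with hszero | hspos
  · have hp' : ∀ b, p b = 0 := by
      intro b
      have := Finset.sum_eq_zero_iff_of_nonneg (fun b _ => hp0 b) |>.mp hszero.symm
      exact this b (Finset.mem_univ b)
    have hn' : ∀ b, n b = 0 := by
      intro b
      have := Finset.sum_eq_zero_iff_of_nonneg (fun b _ => hn0 b) |>.mp
        (by rw [hsn]; exact hszero.symm)
      exact this b (Finset.mem_univ b)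
    have hc0 : ∀ b, c b = 0 := fun b => by rw [hpn b, hp' b, hn' b]; ring
    simp [hc0, ← hszero]
  · have e1 : ∀ (h : B → ℝ) (b : B), ∑ b', p b * n b' * h b = (p b * h b) * s := by
      intro h b; rw [← hsn, Finset.mul_sum]
      apply Finset.sum_congr rfl; intros; ring
    have e2 : ∀ (h : B → ℝ) (b' : B), ∑ b, p b * n b' * h b' = (n b' * h b') * s := by
      intro h b'; rw [hs, Finset.mul_sum]
      apply Finset.sum_congr rfl; intros; ring
    have dbl : ∀ (h : B → ℝ), ∑ b, ∑ b', p b * n b' * (h b - h b')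
        = s * (∑ b, p b * h b) - s * (∑ b, n b * h b) := by
      intro h
      simp_rw [mul_sub, Finset.sum_sub_distrib]
      congr 1
      · simp_rw [e1 h]; rw [← Finset.sum_mul, mul_comm]
      · rw [Finset.sum_comm]; simp_rw [e2 h]; rw [← Finset.sum_mul, mul_comm]
    have key : ∀ x, ∑ b, c b * G b x
        = (1/s) * ∑ b, ∑ b', p b * n b' * (G b x - G b' x) := by
      intro x
      rw [dbl (fun b => G b x)]
      have : ∑ b, c b * G b x = ∑ b, p b * G b x - ∑ b, n b * G b x := by
        simp_rw [hpn, sub_mul]; rw [Finset.sum_sub_distrib]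
      rw [this]
      field_simp
    calc (∑ x, |∑ b, c b * G b x|) / 2
        = (∑ x, (1/s) * |∑ b, ∑ b', p b * n b' * (G b x - G b' x)|) / 2 := by
          simp_rw [key, abs_mul, abs_of_nonneg (by positivity : (0:ℝ) ≤ 1/s)]
      _ = (1/s) * ((∑ x, |∑ b, ∑ b', p b * n b' * (G b x - G b' x)|) / 2) := by
          rw [← Finset.mul_sum, mul_div_assoc]
      _ ≤ (1/s) * ∑ b, ∑ b', p b * n b' * tv (G b) (G b') := by
          gcongr (1/s) * ?_
          unfold tv
          calc (∑ x, |∑ b, ∑ b', p b * n b' * (G b x - G b' x)|) / 2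
              ≤ (∑ x, ∑ b, ∑ b', p b * n b' * |G b x - G b' x|) / 2 := by
                gcongr with x hx
                calc |∑ b, ∑ b', p b * n b' * (G b x - G b' x)|
                    ≤ ∑ b, |∑ b', p b * n b' * (G b x - G b' x)| :=
                      Finset.abs_sum_le_sum_abs _ _
                  _ ≤ ∑ b, ∑ b', |p b * n b' * (G b x - G b' x)| := by
                      gcongr with b hb; exact Finset.abs_sum_le_sum_abs _ _
                  _ = ∑ b, ∑ b', p b * n b' * |G b x - G b' x| := by
                      apply Finset.sum_congr rfl; intro b _
                      apply Finset.sum_congr rfl; intro b' _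
                      rw [abs_mul, abs_of_nonneg (mul_nonneg (hp0 b) (hn0 b'))]
            _ = ∑ b, ∑ b', p b * n b' * ((∑ x, |G b x - G b' x|) / 2) := by
                rw [Finset.sum_comm, Finset.sum_div]
                apply Finset.sum_congr rfl; intro b _
                rw [Finset.sum_comm, Finset.sum_div]
                apply Finset.sum_congr rfl; intro b' _
                rw [← Finset.mul_sum, mul_div_assoc]
      _ ≤ (1/s) * ∑ b, ∑ b', p b * n b' * M := by
          gcongr (1/s) * ?_
          apply Finset.sum_le_sum; intro b _
          apply Finset.sum_le_sum; intro b' _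
          exact mul_le_mul_of_nonneg_left (hM b b') (mul_nonneg (hp0 b) (hn0 b'))
      _ = s * M := by
          have inner : ∀ b, ∑ b', p b * n b' * M = p b * (s * M) := by
            intro b; rw [← hsn, Finset.sum_mul, Finset.mul_sum]
            apply Finset.sum_congr rfl; intros; ring
          simp_rw [inner]
          rw [← Finset.sum_mul, ← hs]
          field_simp

section Main
variable {K : Type*} [Fintype K] [DecidableEq K] {Z : K → Type*}
    [∀ k, Fintype (Z k)] [∀ k, DecidableEq (Z k)] [∀ k, Nonempty (Z k)]

theorem single_coord {X : Type*} [Fintype X] (w w' : ∀ l, Z l → ℝ) (j : K)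
    (hw0 : ∀ l x, 0 ≤ w l x) (hw1 : ∀ l, ∑ x, w l x = 1)
    (hw'1 : ∑ x, w' j x = 1)
    (hagree : ∀ l, l ≠ j → w' l = w l)
    (h : (∀ l, Z l) → X → ℝ) (aj : ℝ) (haj : 0 ≤ aj)
    (hh : ∀ (y y' : ∀ l, Z l), (∀ l, l ≠ j → y l = y' l) → tv (h y) (h y') ≤ aj) :
    tv (fun x => ∑ y, (∏ l, w l (y l)) * h y x)
       (fun x => ∑ y, (∏ l, w' l (y l)) * h y x)
      ≤ tv (w j) (w' j) * aj := by
  classical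
  set W : (∀ l, Z l) → ℝ := fun y => ∏ l ∈ Finset.univ.erase j, w l (y l) with hW
  set G : Z j → X → ℝ := fun b x => ∑ y, (if y j = b then W y * h y x else 0) with hG
  have hW0 : ∀ y, 0 ≤ W y := by
    intro y; apply Finset.prod_nonneg; intro l _; exact hw0 l _
  have hWinv : ∀ (y : ∀ l, Z l) (c : Z j), W (Function.update y j c) = W y := by
    intro y c
    apply Finset.prod_congr rfl
    intro l hl
    rw [Function.update_of_ne (Finset.ne_of_mem_erase hl)]
  have decomp : ∀ (v : ∀ l, Z l → ℝ), (∀ l, l ≠ j → v l = w l) → ∀ x,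
      ∑ y, (∏ l, v l (y l)) * h y x = ∑ b, v j b * G b x := by
    intro v hv x
    rw [hG]
    simp only
    simp_rw [Finset.mul_sum, mul_ite, mul_zero]
    rw [Finset.sum_comm]
    apply Finset.sum_congr rfl
    intro y _
    rw [Finset.sum_ite_eq Finset.univ (y j) (fun b => v j b * (W y * h y x)),
      if_pos (Finset.mem_univ _)]
    have : ∏ l, v l (y l) = v j (y j) * W y := by
      rw [← Finset.mul_prod_erase Finset.univ (fun l => v l (y l)) (Finset.mem_univ j), hW]
      congr 1
      apply Finset.prod_congr rfl
      intro l hl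
      rw [hv l (Finset.ne_of_mem_erase hl)]
    rw [this, mul_assoc]
  have sumW : ∀ b : Z j, ∑ y : ∀ l, Z l, (if y j = b then W y else 0) = 1 := by
    intro b
    set g : ∀ l, Z l → ℝ := Function.update w j (fun _ => (1:ℝ)) with hg
    have hgy : ∀ y : ∀ l, Z l, W y = ∏ l, g l (y l) := by
      intro y
      rw [← Finset.mul_prod_erase Finset.univ (fun l => g l (y l)) (Finset.mem_univ j),
        hg, Function.update_self, one_mul, hW]
      apply Finset.prod_congr rfl
      intro l hl
      rw [Function.update_of_ne (Finset.ne_of_mem_erase hl)]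
    simp_rw [hgy]
    rw [sum_pi_ite g j b, hg, Function.update_self]
    rw [one_mul]
    apply Finset.prod_eq_one
    intro l hl
    rw [Function.update_of_ne (Finset.ne_of_mem_erase hl)]
    exact hw1 l
  have repr : ∀ (c : Z j) (x : X), G c x
      = ∑ y, (if y j = (Classical.arbitrary (Z j)) then W y else 0)
          * h (Function.update y j c) x := by
    intro c x
    rw [hG]
    simp only
    have e1 : ∀ y : ∀ l, Z l, (if y j = c then W y * h y x else 0)
        = (if y j = c then W y * h (Function.update y j c) x else 0) := by
      intro y
      split_ifs with hy
      · rw [← hy, Function.update_eq_self]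
      · rfl
    simp_rw [e1]
    rw [sum_ite_shift j (fun y => W y * h (Function.update y j c) x)
      (by intro y cc; simp only [hWinv, Function.update_idem]) c (Classical.arbitrary (Z j))]
    apply Finset.sum_congr rfl
    intro y _
    split_ifs with hy
    · rfl
    · rw [zero_mul]
  have claimG : ∀ b b', tv (G b) (G b') ≤ aj := by
    intro b b'
    have hb : G b = fun x => ∑ y,
        ((if y j = (Classical.arbitrary (Z j)) then W y else 0) * h (Function.update y j b) x) :=
      funext (repr b)
    have hb' : G b' = fun x => ∑ y,
        ((if y j = (Classical.arbitrary (Z j)) then W y else 0) * h (Function.update y j b') x) :=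
      funext (repr b')
    rw [hb, hb']
    calc tv _ _ ≤ ∑ y, (if y j = (Classical.arbitrary (Z j)) then W y else 0)
          * tv (h (Function.update y j b)) (h (Function.update y j b')) := by
          apply tv_mix
          intro y
          split_ifs with hy
          · exact hW0 y
          · exact le_refl 0
      _ ≤ ∑ y, (if y j = (Classical.arbitrary (Z j)) then W y else 0) * aj := by
          apply Finset.sum_le_sum
          intro y _
          apply mul_le_mul_of_nonneg_left _ (by split_ifs with hy; exacts [hW0 y, le_refl 0])
          apply hh
          intro l hl
          rw [Function.update_of_ne hl, Function.update_of_ne hl]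
      _ = aj := by rw [← Finset.sum_mul, sumW, one_mul]
  -- main computation
  have key : ∀ x : X, (∑ y, (∏ l, w l (y l)) * h y x) - (∑ y, (∏ l, w' l (y l)) * h y x)
      = ∑ b, (w j b - w' j b) * G b x := by
    intro x
    rw [decomp w (fun l _ => rfl) x, decomp w' hagree x, ← Finset.sum_sub_distrib]
    apply Finset.sum_congr rfl
    intros; ring
  have hfinal := tv_comb (fun b => w j b - w' j b)
    (by rw [Finset.sum_sub_distrib, hw1 j, hw'1]; ring) G aj claimG
  have heq : tv (fun x => ∑ y, (∏ l, w l (y l)) * h y x)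
      (fun x => ∑ y, (∏ l, w' l (y l)) * h y x)
      = (∑ x, |∑ b, (w j b - w' j b) * G b x|) / 2 := by
    unfold tv
    congr 1
    apply Finset.sum_congr rfl
    intro x _
    congr 1
    exact key x
  rw [heq]
  calc (∑ x, |∑ b, (w j b - w' j b) * G b x|) / 2
      ≤ ((∑ b, |w j b - w' j b|) / 2) * aj := hfinal
    _ = tv (w j) (w' j) * aj := rfl

end Main

section Main2
variable {K : Type*} [Fintype K] [DecidableEq K] {Z : K → Type*}
    [∀ k, Fintype (Z k)] [∀ k, DecidableEq (Z k)] [∀ k, Nonempty (Z k)]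

theorem key_step {X : Type*} [Fintype X] (u v : ∀ l, Z l → ℝ)
    (hu0 : ∀ l x, 0 ≤ u l x) (hv0 : ∀ l x, 0 ≤ v l x)
    (hu1 : ∀ l, ∑ x, u l x = 1) (hv1 : ∀ l, ∑ x, v l x = 1)
    (h : (∀ l, Z l) → X → ℝ) (a : K → ℝ) (ha0 : ∀ j, 0 ≤ a j)
    (hh : ∀ j (y y' : ∀ l, Z l), (∀ l, l ≠ j → y l = y' l) → tv (h y) (h y') ≤ a j)
    (c : K → ℝ) (hc : ∀ j, tv (u j) (v j) ≤ c j) :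
    tv (fun x => ∑ y, (∏ l, u l (y l)) * h y x)
       (fun x => ∑ y, (∏ l, v l (y l)) * h y x) ≤ ∑ j, c j * a j := by
  classical
  have main : ∀ S : Finset K,
      tv (fun x => ∑ y, (∏ l, u l (y l)) * h y x)
         (fun x => ∑ y, (∏ l, (if l ∈ S then v l else u l) (y l)) * h y x)
        ≤ ∑ j ∈ S, c j * a j := by
    intro S
    induction S using Finset.induction_on with
    | empty =>
      simp only [Finset.notMem_empty, if_false, Finset.sum_empty]
      exact le_of_eq (tv_self' _)
    | @insert j S hj ih =>
      set w : ∀ l, Z l → ℝ := fun l => if l ∈ S then v l else u l with hw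
      set w' : ∀ l, Z l → ℝ := fun l => if l ∈ insert j S then v l else u l with hw'
      have hw0 : ∀ l x, 0 ≤ w l x := by
        intro l x; rw [hw]; dsimp only; split_ifs; exacts [hv0 l x, hu0 l x]
      have hw1 : ∀ l, ∑ x, w l x = 1 := by
        intro l; rw [hw]; dsimp only; split_ifs; exacts [hv1 l, hu1 l]
      have hw'1 : ∑ x, w' j x = 1 := by
        rw [hw']; dsimp only; rw [if_pos (Finset.mem_insert_self j S)]; exact hv1 j
      have hagree : ∀ l, l ≠ j → w' l = w l := by
        intro l hl; rw [hw, hw']; dsimp only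
        by_cases hlS : l ∈ S
        · rw [if_pos hlS, if_pos (Finset.mem_insert_of_mem hlS)]
        · rw [if_neg hlS, if_neg (by simp [Finset.mem_insert, hl, hlS])]
      have hwj : w j = u j := by rw [hw]; dsimp only; rw [if_neg hj]
      have hw'j : w' j = v j := by rw [hw']; dsimp only; rw [if_pos (Finset.mem_insert_self j S)]
      calc tv (fun x => ∑ y, (∏ l, u l (y l)) * h y x)
            (fun x => ∑ y, (∏ l, w' l (y l)) * h y x)
          ≤ tv (fun x => ∑ y, (∏ l, u l (y l)) * h y x)
              (fun x => ∑ y, (∏ l, w l (y l)) * h y x)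
            + tv (fun x => ∑ y, (∏ l, w l (y l)) * h y x)
              (fun x => ∑ y, (∏ l, w' l (y l)) * h y x) := tv_triangle' _ _ _
        _ ≤ (∑ j' ∈ S, c j' * a j') + c j * a j := by
            apply add_le_add ih
            calc tv (fun x => ∑ y, (∏ l, w l (y l)) * h y x)
                  (fun x => ∑ y, (∏ l, w' l (y l)) * h y x)
                ≤ tv (w j) (w' j) * a j :=
                  single_coord w w' j hw0 hw1 hw'1 hagree h (a j) (ha0 j) (hh j)
              _ ≤ c j * a j := by
                  apply mul_le_mul_of_nonneg_right _ (ha0 j)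
                  rw [hwj, hw'j]; exact hc j
        _ = ∑ j' ∈ insert j S, c j' * a j' := by rw [Finset.sum_insert hj]; ring
  have hfin := main Finset.univ
  simpa using hfin

variable (P : ∀ k, (∀ j, Z j) → Z k → ℝ)

theorem chapman (t : ℕ) : ∀ (z z'' : ∀ l, Z l),
    stepLaw P (t+1) z z'' = ∑ y, (∏ l, P l z (y l)) * stepLaw P t y z'' := by
  induction t with
  | zero =>
    intro z z''
    simp [stepLaw, ite_mul, mul_ite, zero_mul, mul_zero]
  | succ t ih =>
    intro z z''
    show (∑ w, stepLaw P (t+1) z w * ∏ l, P l w (z'' l)) = _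
    simp_rw [ih z, Finset.sum_mul]
    rw [Finset.sum_comm]
    apply Finset.sum_congr rfl
    intro y _
    show _ = (∏ l, P l z (y l)) * stepLaw P (t+1) y z''
    rw [show stepLaw P (t+1) y z'' = ∑ w, stepLaw P t y w * ∏ l, P l w (z'' l) from rfl]
    rw [Finset.mul_sum]
    apply Finset.sum_congr rfl
    intros; ring

theorem marg_one (hP1 : ∀ k z, ∑ x, P k z x = 1) (z : ∀ l, Z l) (k : K) (x : Z k) :
    marginal (stepLaw P 1 z) k x = P k z x := by
  unfold marginal
  have h1 : ∀ w : ∀ l, Z l, stepLaw P 1 z w = ∏ l, P l z (w l) := by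
    intro w
    show (∑ y, (if (y : ∀ l, Z l) = z then (1:ℝ) else 0) * ∏ l, P l y (w l)) = _
    rw [Finset.sum_eq_single z]
    · rw [if_pos rfl, one_mul]
    · intro y _ hy; rw [if_neg hy, zero_mul]
    · intro hz; exact absurd (Finset.mem_univ z) hz
  simp_rw [h1]
  rw [sum_pi_ite (fun l => P l z) k x]
  rw [Finset.prod_congr rfl (fun l _ => hP1 l z), Finset.prod_const_one, mul_one]

theorem marginal_succ (t : ℕ) (z : ∀ l, Z l) (k : K) (x : Z k) :
    marginal (stepLaw P (t+1) z) k x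
      = ∑ y, (∏ l, P l z (y l)) * marginal (stepLaw P t y) k x := by
  unfold marginal
  simp_rw [chapman P t z]
  have step1 : ∀ w : ∀ l, Z l,
      (if w k = x then ∑ y, (∏ l, P l z (y l)) * stepLaw P t y w else 0)
      = ∑ y, (∏ l, P l z (y l)) * (if w k = x then stepLaw P t y w else 0) := by
    intro w; split_ifs with hw
    · rfl
    · simp
  simp_rw [step1]
  rw [Finset.sum_comm]
  apply Finset.sum_congr rfl
  intro y _
  rw [Finset.mul_sum]

end Main2



/-- under the weighted Dobrushin condition, the weighted sums of the
influences `δ_i P_k^t` (maximal TV distance of marginals at `k` of `t`-step laws over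
pairs of starting states differing at most in coordinate `i`) satisfy
`∑ i, e^{β d(k,i)} δ_i P_k^t ≤ ρ^t` for all `t ≥ 1`. -/
theorem stmt4 {K : Type*} [Fintype K] [DecidableEq K] [Nonempty K]
    (G : SimpleGraph K) (hG : G.Connected)
    {Z : K → Type*} [∀ k, Fintype (Z k)] [∀ k, DecidableEq (Z k)] [∀ k, Nonempty (Z k)]
    (P : ∀ k, (∀ j, Z j) → Z k → ℝ)
    (hP0 : ∀ k z x, 0 ≤ P k z x) (hP1 : ∀ k z, ∑ x, P k z x = 1)
    (C : K → K → ℝ) (hC0 : ∀ i j, 0 ≤ C i j)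
    (hC : ∀ i j (z z' : ∀ l, Z l), (∀ l, l ≠ j → z l = z' l) →
      tv (P i z) (P i z') ≤ C i j)
    (β ρ : ℝ) (hβ : 0 ≤ β) (hρ : 0 ≤ ρ)
    (hsum : ∀ k, ∑ j, Real.exp (β * G.dist j k) * C k j ≤ ρ)
    (k : K) (t : ℕ) (ht : 1 ≤ t) :
    ∑ i, Real.exp (β * G.dist k i) *
      (⨆ p : {p : (∀ l, Z l) × (∀ l, Z l) // ∀ l, l ≠ i → p.1 l = p.2 l},
        tv (marginal (stepLaw P t p.1.1) k) (marginal (stepLaw P t p.1.2) k)) ≤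
      ρ ^ t := by
  classical
  set A : ℕ → K → ℝ := fun t i =>
    ⨆ p : {p : (∀ l, Z l) × (∀ l, Z l) // ∀ l, l ≠ i → p.1 l = p.2 l},
      tv (marginal (stepLaw P t p.1.1) k) (marginal (stepLaw P t p.1.2) k) with hA
  set y0 : ∀ l, Z l := Classical.arbitrary _ with hy0
  have hne : ∀ i : K,
      Nonempty {p : (∀ l, Z l) × (∀ l, Z l) // ∀ l, l ≠ i → p.1 l = p.2 l} :=
    fun i => ⟨⟨(y0, y0), fun _ _ => rfl⟩⟩
  have hbdd : ∀ (t : ℕ) (i : K), BddAbove (Set.range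
      fun p : {p : (∀ l, Z l) × (∀ l, Z l) // ∀ l, l ≠ i → p.1 l = p.2 l} =>
        tv (marginal (stepLaw P t p.1.1) k) (marginal (stepLaw P t p.1.2) k)) :=
    fun t i => Set.Finite.bddAbove (Set.finite_range _)
  have haup : ∀ (t : ℕ) (i : K) (z z' : ∀ l, Z l), (∀ l, l ≠ i → z l = z' l) →
      tv (marginal (stepLaw P t z) k) (marginal (stepLaw P t z') k) ≤ A t i := by
    intro t i z z' hzz'
    exact le_ciSup (hbdd t i) ⟨(z, z'), hzz'⟩
  have ha0 : ∀ (t : ℕ) (i : K), 0 ≤ A t i := by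
    intro t i
    refine le_trans (le_of_eq (tv_self' (marginal (stepLaw P t y0) k)).symm) ?_
    exact haup t i y0 y0 (fun _ _ => rfl)
  have hAle : ∀ (t : ℕ) (i : K) (b : ℝ), (∀ (z z' : ∀ l, Z l), (∀ l, l ≠ i → z l = z' l) →
      tv (marginal (stepLaw P t z) k) (marginal (stepLaw P t z') k) ≤ b) → A t i ≤ b := by
    intro t i b hb
    haveI := hne i
    exact ciSup_le fun p => hb p.1.1 p.1.2 p.2
  have hbase : ∀ i, A 1 i ≤ C k i := by
    intro i
    apply hAle
    intro z z' hzz'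
    have h1 : marginal (stepLaw P 1 z) k = P k z := funext (marg_one P hP1 z k)
    have h2 : marginal (stepLaw P 1 z') k = P k z' := funext (marg_one P hP1 z' k)
    rw [h1, h2]
    exact hC k i z z' hzz'
  have hrec : ∀ (t : ℕ) (i : K), A (t+1) i ≤ ∑ j, C j i * A t j := by
    intro t i
    apply hAle
    intro z z' hzz'
    have h1 : marginal (stepLaw P (t+1) z) k
        = fun x => ∑ y, (∏ l, P l z (y l)) * marginal (stepLaw P t y) k x :=
      funext (marginal_succ P t z k)
    have h2 : marginal (stepLaw P (t+1) z') k
        = fun x => ∑ y, (∏ l, P l z' (y l)) * marginal (stepLaw P t y) k x :=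
      funext (marginal_succ P t z' k)
    rw [h1, h2]
    exact key_step (fun l => P l z) (fun l => P l z')
      (fun l x => hP0 l z x) (fun l x => hP0 l z' x)
      (fun l => hP1 l z) (fun l => hP1 l z')
      (fun y => marginal (stepLaw P t y) k) (fun j => A t j) (ha0 t)
      (fun j y y' hy => haup t j y y' hy)
      (fun j => C j i) (fun j => hC j i z z' hzz')
  have hexp : ∀ i j : K, Real.exp (β * G.dist k i)
      ≤ Real.exp (β * G.dist k j) * Real.exp (β * G.dist j i) := by
    intro i j
    rw [← Real.exp_add, ← mul_add]
    apply Real.exp_le_exp.2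
    apply mul_le_mul_of_nonneg_left _ hβ
    exact_mod_cast hG.dist_triangle (v := j)
  suffices hgen : ∀ t : ℕ, 1 ≤ t →
      ∑ i, Real.exp (β * G.dist k i) * A t i ≤ ρ ^ t by
    exact hgen t ht
  intro t ht
  induction t, ht using Nat.le_induction with
  | base =>
    rw [pow_one]
    calc ∑ i, Real.exp (β * G.dist k i) * A 1 i
        ≤ ∑ i, Real.exp (β * G.dist k i) * C k i := by
          apply Finset.sum_le_sum; intro i _
          exact mul_le_mul_of_nonneg_left (hbase i) (Real.exp_nonneg _)
      _ = ∑ i, Real.exp (β * G.dist i k) * C k i := by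
          apply Finset.sum_congr rfl; intro i _; rw [SimpleGraph.dist_comm]
      _ ≤ ρ := hsum k
  | succ t ht ih =>
    calc ∑ i, Real.exp (β * G.dist k i) * A (t+1) i
        ≤ ∑ i, Real.exp (β * G.dist k i) * ∑ j, C j i * A t j := by
          apply Finset.sum_le_sum; intro i _
          exact mul_le_mul_of_nonneg_left (hrec t i) (Real.exp_nonneg _)
      _ = ∑ j, ∑ i, Real.exp (β * G.dist k i) * (C j i * A t j) := by
          simp_rw [Finset.mul_sum]; rw [Finset.sum_comm]
      _ ≤ ∑ j, ∑ i, (Real.exp (β * G.dist k j) * (Real.exp (β * G.dist j i) * C j i))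
            * A t j := by
          apply Finset.sum_le_sum; intro j _
          apply Finset.sum_le_sum; intro i _
          calc Real.exp (β * G.dist k i) * (C j i * A t j)
              = (Real.exp (β * G.dist k i) * C j i) * A t j := by ring
            _ ≤ ((Real.exp (β * G.dist k j) * Real.exp (β * G.dist j i)) * C j i)
                  * A t j := by
                apply mul_le_mul_of_nonneg_right _ (ha0 t j)
                exact mul_le_mul_of_nonneg_right (hexp i j) (hC0 j i)
            _ = (Real.exp (β * G.dist k j) * (Real.exp (β * G.dist j i) * C j i))
                  * A t j := by ring
      _ = ∑ j, (Real.exp (β * G.dist k j) * A t j)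
            * ∑ i, Real.exp (β * G.dist j i) * C j i := by
          apply Finset.sum_congr rfl; intro j _
          rw [Finset.mul_sum]
          apply Finset.sum_congr rfl; intros; ring
      _ ≤ ∑ j, (Real.exp (β * G.dist k j) * A t j) * ρ := by
          apply Finset.sum_le_sum; intro j _
          apply mul_le_mul_of_nonneg_left _ (mul_nonneg (Real.exp_nonneg _) (ha0 t j))
          calc ∑ i, Real.exp (β * G.dist j i) * C j i
              = ∑ i, Real.exp (β * G.dist i j) * C j i := by
                apply Finset.sum_congr rfl; intro i _; rw [SimpleGraph.dist_comm]
            _ ≤ ρ := hsum j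
      _ = ρ * ∑ j, Real.exp (β * G.dist k j) * A t j := by
          rw [Finset.mul_sum]; apply Finset.sum_congr rfl; intros; ring
      _ ≤ ρ * ρ ^ t := mul_le_mul_of_nonneg_left ih hρ
      _ = ρ ^ (t+1) := by ring
end
end

section
/- Fix an agent k ∈ K, constants c ≥ 0 and ψ > 0, and a function Q : S × A → ℝ satisfying the (c,ψ)-exponential decay property at k: for every r ∈ ℕ and every (s,a), (s̃,ã) ∈ S×A with s_j = s̃_j and a_j = ã_j for all j ∈ N_k^r, |Q(s,a) − Q(s̃,ã)| ≤ c ψ^{r+1}. Define V(s) = max_{a∈A} Q(s,a). Then for every r ∈ ℕ and every s, s̃ ∈ S with s_j = s̃_j for all j ∈ N_k^r, |V(s) − V(s̃)| ≤ 3c ψ^{r+1}. -/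
open scoped BigOperators

noncomputable section

/-- if `Q : S × A → ℝ` satisfies the `(c,ψ)`-exponential decay property at
agent `k`, then `V(s) = max_a Q(s,a)` satisfies the exponential decay property with
constants `(3c, ψ)`. -/
theorem stmt8 {K : Type*} [Fintype K] [DecidableEq K] [Nonempty K]
    (G : SimpleGraph K) (hG : G.Connected)
    {S A : K → Type*} [∀ k, Fintype (S k)] [∀ k, Nonempty (S k)]
    [∀ k, Fintype (A k)] [∀ k, Nonempty (A k)]
    (k : K) (c ψ : ℝ) (hc : 0 ≤ c) (hψ : 0 < ψ)
    (Q : (∀ j, S j) × (∀ j, A j) → ℝ)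
    (hQ : ∀ (r : ℕ) (s st : ∀ j, S j) (a at' : ∀ j, A j),
      (∀ j, G.dist k j ≤ r → s j = st j ∧ a j = at' j) →
      |Q (s, a) - Q (st, at')| ≤ c * ψ ^ (r + 1))
    (r : ℕ) (s st : ∀ j, S j) (hagree : ∀ j, G.dist k j ≤ r → s j = st j) :
    |(⨆ a : ∀ j, A j, Q (s, a)) - ⨆ a : ∀ j, A j, Q (st, a)| ≤ 3 * c * ψ ^ (r + 1) := by
  have hB : ∀ f : (∀ j, A j) → ℝ, BddAbove (Set.range f) := fun f =>
    Set.Finite.bddAbove (Set.finite_range f)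
  have key : ∀ a : ∀ j, A j, |Q (s, a) - Q (st, a)| ≤ c * ψ ^ (r + 1) := fun a =>
    hQ r s st a a (fun j hj => ⟨hagree j hj, rfl⟩)
  have hcψ : 0 ≤ c * ψ ^ (r + 1) := mul_nonneg hc (pow_nonneg hψ.le _)
  have h1 : |(⨆ a : ∀ j, A j, Q (s, a)) - ⨆ a : ∀ j, A j, Q (st, a)| ≤ c * ψ ^ (r + 1) := by
    rw [abs_sub_le_iff]
    constructor
    · rw [sub_le_iff_le_add]
      refine ciSup_le fun a => ?_
      have h := le_ciSup (hB fun a => Q (st, a)) a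
      linarith [(abs_sub_le_iff.mp (key a)).1]
    · rw [sub_le_iff_le_add]
      refine ciSup_le fun a => ?_
      have h := le_ciSup (hB fun a => Q (s, a)) a
      linarith [(abs_sub_le_iff.mp (key a)).2]
  nlinarith
end
end

section
/- Fix an agent k ∈ K, constants c ≥ 0, ψ > 0, and R > 0, and a function Q : S × A → ℝ satisfying the (c,ψ)-exponential decay property at k: for every r ∈ ℕ and every (s,a), (s̃,ã) ∈ S×A with s_j = s̃_j and a_j = ã_j for all j ∈ N_k^r, |Q(s,a) − Q(s̃,ã)| ≤ c ψ^{r+1}. For s ∈ S let A*(s) = argmax_{a∈A} Q(s,a) and A*_k(s) = {a_k : a ∈ A*(s)}. Assume the minimum-influence condition: for every s ∈ S, every a ∈ A*(s), and every ã ∈ A with ã_k ∉ A*_k(s), |Q(s,a) − Q(s,ã)| ≥ R. If r ∈ ℕ satisfies 4c ψ^{r+1} < R, then for every s, s̃ ∈ S with s_j = s̃_j for all j ∈ N_k^r and every ã ∈ argmax_{a∈A} Q(s̃,a), one has ã_k ∈ A*_k(s). -/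
open scoped BigOperators

noncomputable section

/-- if `Q` satisfies the `(c,ψ)`-exponential decay property at agent `k`
together with the minimum-influence condition with margin `R`, and `4cψ^{r+1} < R`, then
the `k`-component of any maximizer of `Q(s̃,·)` belongs to the set of `k`-components of
maximizers of `Q(s,·)`, whenever `s` and `s̃` agree on the neighborhood `N_k^r`. -/
theorem stmt9 {K : Type*} [Fintype K] [DecidableEq K] [Nonempty K]
    (G : SimpleGraph K) (hG : G.Connected)
    {S A : K → Type*} [∀ k, Fintype (S k)] [∀ k, Nonempty (S k)]
    [∀ k, Fintype (A k)] [∀ k, Nonempty (A k)]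
    (k : K) (c ψ R : ℝ) (hc : 0 ≤ c) (hψ : 0 < ψ) (hR : 0 < R)
    (Q : (∀ j, S j) × (∀ j, A j) → ℝ)
    (hQ : ∀ (r : ℕ) (s st : ∀ j, S j) (a at' : ∀ j, A j),
      (∀ j, G.dist k j ≤ r → s j = st j ∧ a j = at' j) →
      |Q (s, a) - Q (st, at')| ≤ c * ψ ^ (r + 1))
    (hmin : ∀ (s : ∀ j, S j) (a : ∀ j, A j),
      (∀ a' : ∀ j, A j, Q (s, a') ≤ Q (s, a)) →
      ∀ at' : ∀ j, A j,
        (¬ ∃ a'' : ∀ j, A j, (∀ a' : ∀ j, A j, Q (s, a') ≤ Q (s, a'')) ∧ a'' k = at' k) →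
        R ≤ |Q (s, a) - Q (s, at')|)
    (r : ℕ) (hr : 4 * c * ψ ^ (r + 1) < R)
    (s st : ∀ j, S j) (hagree : ∀ j, G.dist k j ≤ r → s j = st j)
    (at' : ∀ j, A j) (hat : ∀ a' : ∀ j, A j, Q (st, a') ≤ Q (st, at')) :
    ∃ a'' : ∀ j, A j, (∀ a' : ∀ j, A j, Q (s, a') ≤ Q (s, a'')) ∧ a'' k = at' k := by
  -- obtain a maximizer of Q(s, ·)
  obtain ⟨a, -, ha⟩ := Finset.exists_max_image (Finset.univ : Finset (∀ j, A j))
    (fun a' => Q (s, a')) ⟨Classical.arbitrary _, Finset.mem_univ _⟩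
  have ha' : ∀ a' : ∀ j, A j, Q (s, a') ≤ Q (s, a) := fun a' => ha a' (Finset.mem_univ _)
  by_contra hcon
  have hRle : R ≤ |Q (s, a) - Q (s, at')| := hmin s a ha' at' hcon
  have hRle' : R ≤ Q (s, a) - Q (s, at') := by
    rcases abs_cases (Q (s, a) - Q (s, at')) with ⟨h1, _⟩ | ⟨h1, h2⟩
    · linarith
    · linarith [ha' at']
  set e := c * ψ ^ (r + 1) with he
  have h1 : |Q (s, at') - Q (st, at')| ≤ e :=
    hQ r s st at' at' (fun j hj => ⟨hagree j hj, rfl⟩)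
  have h2 : |Q (s, a) - Q (st, a)| ≤ e :=
    hQ r s st a a (fun j hj => ⟨hagree j hj, rfl⟩)
  have h3 : Q (st, a) ≤ Q (st, at') := hat a
  have h1' := abs_le.mp h1
  have h2' := abs_le.mp h2
  linarith [h1'.1, h1'.2, h2'.1, h2'.2]
end
end

section
/- Fix an agent k ∈ K, let r̃ = max_{i,j∈K} d(i,j), and let C > 0. For each integer 0 ≤ r' ≤ r̃ let f_{r'} : S × A_k → [−C, C] be a function depending on s only through s_{N_k^{r'}} (i.e. f_{r'}(s,a) = f_{r'}(s̃,a) whenever s_j = s̃_j for all j ∈ N_k^{r'}), and let α_{r'} ∈ [0,1]. Define f(s,a) = Σ_{r'=0}^{r̃} α_{r'} f_{r'}(s,a) and the softmax policy π(a|s) = exp(f(s,a)) / Σ_{a'∈A_k} exp(f(s,a')). Then for every integer 0 ≤ r ≤ r̃ and every s, s̃ ∈ S with s_j = s̃_j for all j ∈ N_k^r, TV(π(·|s), π(·|s̃)) ≤ 2C · e^{2C(r̃ − r)} · Σ_{r'=r+1}^{r̃} α_{r'}. -/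
open scoped BigOperators

noncomputable section

lemma exp_sub_exp_le (x y δ : ℝ) (h : |x - y| ≤ 2*δ) :
    |Real.exp x - Real.exp y| ≤ 2 * Real.sinh δ * Real.exp ((x+y)/2) := by
  have e1 : Real.exp ((x+y)/2) * Real.exp ((x-y)/2) = Real.exp x := by
    rw [← Real.exp_add]; ring_nf
  have e2 : Real.exp ((x+y)/2) * Real.exp (-((x-y)/2)) = Real.exp y := by
    rw [← Real.exp_add]; ring_nf
  have key : Real.exp x - Real.exp y = Real.exp ((x+y)/2) * (2 * Real.sinh ((x-y)/2)) := by
    rw [Real.sinh_eq]; rw [← e1, ← e2]; ring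
  rw [key, abs_mul, abs_of_pos (Real.exp_pos _), abs_mul, abs_two]
  have h2 : |Real.sinh ((x-y)/2)| ≤ Real.sinh δ := by
    rw [Real.abs_sinh]
    apply Real.sinh_le_sinh.2
    rw [abs_div, abs_two]
    linarith
  calc Real.exp ((x+y)/2) * (2 * |Real.sinh ((x-y)/2)|)
      ≤ Real.exp ((x+y)/2) * (2 * Real.sinh δ) := by
        apply mul_le_mul_of_nonneg_left _ (Real.exp_pos _).le
        linarith
    _ = 2 * Real.sinh δ * Real.exp ((x+y)/2) := by ring

lemma softmax_tv {A : Type*} [Fintype A] [Nonempty A] (u v : A → ℝ) (δ : ℝ)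
    (h : ∀ a, |u a - v a| ≤ δ) :
    tv (fun a => Real.exp (u a) / ∑ a', Real.exp (u a'))
       (fun a => Real.exp (v a) / ∑ a', Real.exp (v a')) ≤ Real.sinh δ := by
  have hδ : 0 ≤ δ := le_trans (abs_nonneg _) (h (Classical.arbitrary A))
  set Zu := ∑ a', Real.exp (u a') with hZu'
  set Zv := ∑ a', Real.exp (v a') with hZv'
  have hZu : 0 < Zu := Finset.sum_pos (fun _ _ => Real.exp_pos _) Finset.univ_nonempty
  have hZv : 0 < Zv := Finset.sum_pos (fun _ _ => Real.exp_pos _) Finset.univ_nonempty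
  set w : A → ℝ := fun c => Real.exp ((u c + v c)/2) with hw
  have hCS : (∑ c, w c)^2 ≤ Zu * Zv := by
    have hh := Finset.sum_mul_sq_le_sq_mul_sq Finset.univ (fun c => Real.exp (u c / 2))
      (fun c => Real.exp (v c / 2))
    have e3 : (∑ c, w c) = ∑ c, Real.exp (u c/2) * Real.exp (v c/2) := by
      apply Finset.sum_congr rfl; intro c _
      rw [hw, ← Real.exp_add]; ring_nf
    have e4 : (∑ c, Real.exp (u c/2)^2) = Zu := by
      apply Finset.sum_congr rfl; intro c _
      rw [sq, ← Real.exp_add, add_halves]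
    have e5 : (∑ c, Real.exp (v c/2)^2) = Zv := by
      apply Finset.sum_congr rfl; intro c _
      rw [sq, ← Real.exp_add, add_halves]
    rw [e3]; rw [← e4, ← e5]; exact hh
  have hpt : ∀ a, |Real.exp (u a) / Zu - Real.exp (v a) / Zv| ≤
      (∑ b, 2 * Real.sinh δ * (w a * w b)) / (Zu * Zv) := by
    intro a
    rw [div_sub_div _ _ hZu.ne' hZv.ne', abs_div, abs_of_pos (mul_pos hZu hZv)]
    gcongr
    have expand : Real.exp (u a) * Zv - Zu * Real.exp (v a)
        = ∑ b, (Real.exp (u a + v b) - Real.exp (v a + u b)) := by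
      rw [hZv', hZu', Finset.mul_sum, Finset.sum_mul, ← Finset.sum_sub_distrib]
      apply Finset.sum_congr rfl; intro b _
      rw [Real.exp_add, Real.exp_add]; ring
    rw [expand]
    refine le_trans (Finset.abs_sum_le_sum_abs _ _) (Finset.sum_le_sum fun b _ => ?_)
    have habs : |(u a + v b) - (v a + u b)| ≤ 2 * δ := by
      have h3 : |(u a - v a) - (u b - v b)| ≤ |u a - v a| + |u b - v b| :=
        abs_sub _ _
      have h4 : (u a + v b) - (v a + u b) = (u a - v a) - (u b - v b) := by ring
      rw [h4]
      linarith [h a, h b]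
    refine le_trans (exp_sub_exp_le _ _ δ habs) (le_of_eq ?_)
    congr 1
    rw [hw]
    show Real.exp _ = Real.exp _ * Real.exp _
    rw [← Real.exp_add]; ring_nf
  have hdouble : (∑ a, ∑ b, 2 * Real.sinh δ * (w a * w b))
      = 2 * Real.sinh δ * (∑ c, w c)^2 := by
    rw [sq, Finset.sum_mul_sum, Finset.mul_sum]
    exact Finset.sum_congr rfl fun a _ => by rw [Finset.mul_sum]
  have hsum : ∑ a, |Real.exp (u a) / Zu - Real.exp (v a) / Zv| ≤ 2 * Real.sinh δ := by
    calc ∑ a, |Real.exp (u a) / Zu - Real.exp (v a) / Zv|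
        ≤ ∑ a, (∑ b, 2 * Real.sinh δ * (w a * w b)) / (Zu * Zv) :=
          Finset.sum_le_sum fun a _ => hpt a
      _ = 2 * Real.sinh δ * ((∑ c, w c)^2 / (Zu * Zv)) := by
          rw [← Finset.sum_div, hdouble, mul_div_assoc]
      _ ≤ 2 * Real.sinh δ * 1 := by
          have hs : 0 ≤ Real.sinh δ := Real.sinh_nonneg_iff.2 hδ
          apply mul_le_mul_of_nonneg_left _ (by linarith)
          rw [div_le_one (mul_pos hZu hZv)]; exact hCS
      _ = 2 * Real.sinh δ := by ring
  rw [tv]; linarith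
lemma sinh_le_mul_exp (x : ℝ) (hx : 0 ≤ x) : Real.sinh x ≤ x * Real.exp x := by
  rw [Real.sinh_eq]
  have h1 : 1 + (-(2*x)) ≤ Real.exp (-(2*x)) := by
    linarith [Real.add_one_le_exp (-(2*x))]
  have h2 : Real.exp (-x) = Real.exp x * Real.exp (-(2*x)) := by
    rw [← Real.exp_add]; ring_nf
  nlinarith [Real.exp_pos x, Real.exp_pos (-(2*x))]


/-- for the softmax policy built from localized bounded features
`f_{r'} : S × A_k → [-C,C]` (each depending on the state only through `s_{N_k^{r'}}`)
with mixing weights `α_{r'} ∈ [0,1]`, the total variation between the policies at two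
states agreeing on `N_k^r` is at most `2C e^{2C(r̃-r)} ∑_{r'=r+1}^{r̃} α_{r'}`. -/
theorem stmt10 {K : Type*} [Fintype K] [DecidableEq K] [Nonempty K]
    (G : SimpleGraph K) (hG : G.Connected)
    {S A : K → Type*} [∀ k, Fintype (S k)] [∀ k, Nonempty (S k)]
    [∀ k, Fintype (A k)] [∀ k, Nonempty (A k)]
    (k : K) (C : ℝ) (hC : 0 < C)
    (rt : ℕ) (hrt : rt = Finset.univ.sup fun p : K × K => G.dist p.1 p.2)
    (f : ℕ → (∀ j, S j) → A k → ℝ)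
    (hfb : ∀ r', r' ≤ rt → ∀ s a, -C ≤ f r' s a ∧ f r' s a ≤ C)
    (hfloc : ∀ r', r' ≤ rt → ∀ (s st : ∀ j, S j) (a : A k),
      (∀ j, G.dist k j ≤ r' → s j = st j) → f r' s a = f r' st a)
    (α : ℕ → ℝ) (hα : ∀ r', 0 ≤ α r' ∧ α r' ≤ 1)
    (F : (∀ j, S j) → A k → ℝ)
    (hF : ∀ s a, F s a = ∑ r' ∈ Finset.range (rt + 1), α r' * f r' s a)
    (r : ℕ) (hr : r ≤ rt)
    (s st : ∀ j, S j) (hagree : ∀ j, G.dist k j ≤ r → s j = st j) :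
    tv (fun a => Real.exp (F s a) / ∑ a', Real.exp (F s a'))
       (fun a => Real.exp (F st a) / ∑ a', Real.exp (F st a')) ≤
      2 * C * Real.exp (2 * C * ((rt : ℝ) - r)) * ∑ r' ∈ Finset.Icc (r + 1) rt, α r' := by
  set δ : ℝ := 2 * C * ∑ r' ∈ Finset.Icc (r + 1) rt, α r' with hδdef
  have hαsum : 0 ≤ ∑ r' ∈ Finset.Icc (r + 1) rt, α r' :=
    Finset.sum_nonneg fun i _ => (hα i).1
  have hδnn : 0 ≤ δ := by positivity
  -- pointwise bound on F differences
  have hkey : ∀ a, |F s a - F st a| ≤ δ := by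
    intro a
    have e1 : F s a - F st a
        = ∑ r' ∈ Finset.range (rt + 1), α r' * (f r' s a - f r' st a) := by
      rw [hF, hF, ← Finset.sum_sub_distrib]
      exact Finset.sum_congr rfl fun i _ => by ring
    have e2 : ∑ r' ∈ Finset.Icc (r + 1) rt, α r' * (f r' s a - f r' st a)
        = ∑ r' ∈ Finset.range (rt + 1), α r' * (f r' s a - f r' st a) := by
      apply Finset.sum_subset
      · intro x hx
        rw [Finset.mem_Icc] at hx
        rw [Finset.mem_range]
        omega
      · intro x hx hx'
        rw [Finset.mem_range] at hx
        rw [Finset.mem_Icc] at hx'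
        have hxr : x ≤ r := by omega
        have : f x s a = f x st a :=
          hfloc x (hxr.trans hr) s st a fun j hj => hagree j (hj.trans hxr)
        rw [this]; ring
    rw [e1, ← e2]
    calc |∑ r' ∈ Finset.Icc (r + 1) rt, α r' * (f r' s a - f r' st a)|
        ≤ ∑ r' ∈ Finset.Icc (r + 1) rt, |α r' * (f r' s a - f r' st a)| :=
          Finset.abs_sum_le_sum_abs _ _
      _ ≤ ∑ r' ∈ Finset.Icc (r + 1) rt, 2 * C * α r' := by
          apply Finset.sum_le_sum
          intro i hi
          rw [Finset.mem_Icc] at hi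
          have hiC := hfb i hi.2 s a
          have hiC' := hfb i hi.2 st a
          have habs : |f i s a - f i st a| ≤ 2 * C := by
            have := abs_sub (f i s a) (f i st a)
            have h1 : |f i s a| ≤ C := abs_le.2 ⟨hiC.1, hiC.2⟩
            have h2 : |f i st a| ≤ C := abs_le.2 ⟨hiC'.1, hiC'.2⟩
            linarith
          rw [abs_mul, abs_of_nonneg (hα i).1]
          calc α i * |f i s a - f i st a| ≤ α i * (2 * C) :=
                mul_le_mul_of_nonneg_left habs (hα i).1
            _ = 2 * C * α i := by ring
      _ = δ := by rw [hδdef, Finset.mul_sum]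
  have htv := softmax_tv (F s) (F st) δ hkey
  have hδle : δ ≤ 2 * C * ((rt : ℝ) - r) := by
    have hcard : ∑ r' ∈ Finset.Icc (r + 1) rt, α r' ≤ ((rt : ℝ) - r) := by
      calc ∑ r' ∈ Finset.Icc (r + 1) rt, α r'
          ≤ ∑ r' ∈ Finset.Icc (r + 1) rt, (1 : ℝ) :=
            Finset.sum_le_sum fun i _ => (hα i).2
        _ = ((Finset.Icc (r + 1) rt).card : ℝ) := by simp
        _ = ((rt : ℝ) - r) := by
            rw [Nat.card_Icc]
            have : rt + 1 - (r + 1) = rt - r := by omega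
            rw [this, Nat.cast_sub hr]
    calc δ = 2 * C * ∑ r' ∈ Finset.Icc (r + 1) rt, α r' := hδdef
      _ ≤ 2 * C * ((rt : ℝ) - r) :=
        mul_le_mul_of_nonneg_left hcard (by positivity)
  have hfinal : Real.sinh δ ≤ δ * Real.exp (2 * C * ((rt : ℝ) - r)) := by
    calc Real.sinh δ ≤ δ * Real.exp δ := sinh_le_mul_exp δ hδnn
      _ ≤ δ * Real.exp (2 * C * ((rt : ℝ) - r)) :=
        mul_le_mul_of_nonneg_left (Real.exp_le_exp.2 hδle) hδnn
  have heq : δ * Real.exp (2 * C * ((rt : ℝ) - r))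
      = 2 * C * Real.exp (2 * C * ((rt : ℝ) - r)) * ∑ r' ∈ Finset.Icc (r + 1) rt, α r' := by
    rw [hδdef]; ring
  exact le_trans htv (le_trans hfinal heq.le)
end
end
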